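/- arXiv:2202.04957 — 2 statements merged into one kernel-verified Lean document; each statement's English description precedes it below -/
import Mathlib

section
/- Let G be a graph with Laplacian L, a, b twin vertices, M = (e_a - e_b)(e_a - e_b)^T, α ∈ ℝ. If e_p - e_q with p, q both distinct from a and b is periodic at time τ in G, then it is periodic at time τ in the perturbed graph with Laplacian L + αM. -/
/-!
Twin vertices `a`, `b` make `e_a - e_b` an eigenvector of the Laplacian `L`. Since `L` is
symmetric, it then commutes with `M = (e_a - e_b)(e_a - e_b)ᵀ`, so
`exp(-iτ(L + αM)) = exp(-iτL) exp(-iταM)`. As `e_p - e_q` is orthogonal to `e_a - e_b`, it lies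
in the kernel of `M`, which `exp(-iταM)` fixes; hence the perturbed evolution acts on `e_p - e_q`
exactly as the unperturbed one does.
-/

open Matrix Complex

namespace Matrix

variable {m : Type*} [Fintype m]

theorem IsSymm.commute_vecMulVec_self {R : Type*} [CommRing R] {A : Matrix m m R} (hA : A.IsSymm)
    {w : m → R} {c : R} (hw : A *ᵥ w = c • w) : Commute A (vecMulVec w w) := by
  rw [Commute, SemiconjBy, mul_vecMulVec, vecMulVec_mul, ← mulVec_transpose, hA.eq, hw,
    smul_vecMulVec, vecMulVec_smul]

variable [DecidableEq m] {𝕂 : Type*} [RCLike 𝕂]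

open scoped Norms.Operator in
theorem exp_mulVec_of_mulVec_eq_zero {A : Matrix m m 𝕂} {v : m → 𝕂} (h : A *ᵥ v = 0) :
    NormedSpace.exp A *ᵥ v = v := by
  have hsum := (NormedSpace.exp_series_hasSum_exp' (𝕂 := 𝕂) A).map
    (mulVec.addMonoidHomLeft v) (continuous_id.matrix_mulVec continuous_const)
  have hterm : ∀ k ≠ 0, ((k.factorial : 𝕂)⁻¹ • A ^ k) *ᵥ v = 0 := by
    rintro (_ | k) hk
    · contradiction
    · rw [smul_mulVec, pow_succ, ← mulVec_mulVec, h, mulVec_zero, smul_zero]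
  exact (hsum.unique (hasSum_single 0 hterm)).trans (by simp)

theorem exp_add_mulVec_of_mulVec_eq_zero {A B : Matrix m m 𝕂} (hAB : Commute A B) {v : m → 𝕂}
    (hB : B *ᵥ v = 0) : NormedSpace.exp (A + B) *ᵥ v = NormedSpace.exp A *ᵥ v := by
  rw [exp_add_of_commute A B hAB, ← mulVec_mulVec, exp_mulVec_of_mulVec_eq_zero hB]

end Matrix

namespace SimpleGraph

variable {V : Type*} (G : SimpleGraph V)

def AreTwins (a b : V) : Prop := ∀ v, v ≠ a → v ≠ b → (G.Adj a v ↔ G.Adj b v)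

variable {G} [Fintype V] [DecidableRel G.Adj] {a b : V}

theorem AreTwins.degree_eq (h : G.AreTwins a b) : G.degree a = G.degree b := by
  classical
  refine Finset.card_equiv (Equiv.swap a b) fun x => ?_
  simp only [mem_neighborFinset]
  rcases eq_or_ne x a with rfl | hxa
  · simp
  rcases eq_or_ne x b with rfl | hxb
  · simp [adj_comm]
  · simp [Equiv.swap_apply_of_ne_of_ne hxa hxb, h x hxa hxb]

theorem AreTwins.lapMatrix_mulVec_single_sub_single [DecidableEq V] {R : Type*} [Ring R]
    (h : G.AreTwins a b) (hab : a ≠ b) :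
    G.lapMatrix R *ᵥ (Pi.single a 1 - Pi.single b 1)
      = ((G.degree a + if G.Adj a b then 1 else 0 : ℕ) : R) • (Pi.single a 1 - Pi.single b 1) := by
  ext i
  rw [lapMatrix_mulVec_apply, Pi.sub_def, Finset.sum_sub_distrib, Finset.sum_pi_single',
    Finset.sum_pi_single']
  simp only [mem_neighborFinset]
  rcases eq_or_ne i a with rfl | hia
  · simp [hab]
  rcases eq_or_ne i b with rfl | hib
  · simp [hab.symm, h.degree_eq, adj_comm]
    abel
  · simp [hia, hib, G.adj_comm i a, G.adj_comm i b, h i hia hib]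

end SimpleGraph

theorem periodicity_preserved_away_from_twins
    {n : ℕ} (G : SimpleGraph (Fin n)) [DecidableRel G.Adj]
    (a b p q : Fin n) (hab : a ≠ b)
    (hpa : p ≠ a) (hpb : p ≠ b) (hqa : q ≠ a) (hqb : q ≠ b)
    (htwin : ∀ v : Fin n, v ≠ a → v ≠ b → (G.Adj a v ↔ G.Adj b v))
    (α τ : ℝ) (γ : ℂ) (hγ : ‖γ‖ = 1)
    (hper : (NormedSpace.exp ((-(Complex.I * (τ : ℂ))) • G.lapMatrix ℂ)).mulVec
        ((Pi.single p 1 : Fin n → ℂ) - Pi.single q 1)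
      = γ • ((Pi.single p 1 : Fin n → ℂ) - Pi.single q 1)) :
    ∃ γ' : ℂ, ‖γ'‖ = 1 ∧
      (NormedSpace.exp ((-(Complex.I * (τ : ℂ))) •
          (G.lapMatrix ℂ + (α : ℂ) •
            vecMulVec ((Pi.single a 1 : Fin n → ℂ) - Pi.single b 1)
              ((Pi.single a 1 : Fin n → ℂ) - Pi.single b 1)))).mulVec
          ((Pi.single p 1 : Fin n → ℂ) - Pi.single q 1)
        = γ' • ((Pi.single p 1 : Fin n → ℂ) - Pi.single q 1) := by
  set w : Fin n → ℂ := Pi.single a 1 - Pi.single b 1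
  set v : Fin n → ℂ := Pi.single p 1 - Pi.single q 1
  have hcomm : Commute (G.lapMatrix ℂ) (vecMulVec w w) :=
    (G.isSymm_lapMatrix ℂ).commute_vecMulVec_self
      (SimpleGraph.AreTwins.lapMatrix_mulVec_single_sub_single htwin hab)
  have hMv : vecMulVec w w *ᵥ v = 0 := by
    simp [w, v, vecMulVec_mulVec, hpa.symm, hpb.symm, hqa.symm, hqb.symm]
  refine ⟨γ, hγ, ?_⟩
  rw [smul_add, exp_add_mulVec_of_mulVec_eq_zero, hper]
  · exact ((hcomm.smul_right _).smul_right _).smul_left _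
  · rw [smul_mulVec, smul_mulVec, hMv, smul_zero, smul_zero]
end

section
/- Let K_{2,4n} be the complete bipartite graph with parts {a,b} (size 2) and {1,...,4n}, with Laplacian L. Then for each i ∈ {1,...,4n}, K_{2,4n} has Pair-LPST from e_a - e_i to e_b - e_i at time π/2: exp(-i(π/2)L)(e_a - e_i) = γ(e_b - e_i) for some unimodular complex γ. -/
/-!
On `K_{2,m}` the Laplacian has eigenvalue `m` on `e_a - e_b`, eigenvalue `m + 2` on
`m (e_a + e_b) - 2 · 𝟙_{right}`, and eigenvalue `2` on vectors supported on the right part with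
zero sum. Since `exp (-i π/2 λ) = (-i)^λ` is `1` for `λ = 4n` and `-1` for `λ = 2, 4n + 2`, the walk
at time `π/2` fixes `e_a - e_b` and negates `e_a + e_b - 2 e_i` (a `(4n+2)`-eigenvector plus a
`2`-eigenvector). Hence it sends `e_a - e_i = ((e_a - e_b) + (e_a + e_b - 2 e_i)) / 2` to
`((e_a - e_b) - (e_a + e_b - 2 e_i)) / 2 = -(e_b - e_i)`.
-/

open Matrix Finset Complex Real

namespace Matrix

variable {ι : Type*} [Fintype ι] [DecidableEq ι]

lemma pow_mulVec_of_mulVec_eq_smul {R : Type*} [CommSemiring R] {A : Matrix ι ι R}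
    {x : ι → R} {μ : R} (h : A *ᵥ x = μ • x) (k : ℕ) : A ^ k *ᵥ x = μ ^ k • x := by
  induction k with
  | zero => simp
  | succ k ih => rw [pow_succ, ← mulVec_mulVec, h, mulVec_smul, ih, smul_smul, pow_succ']

attribute [local instance] Matrix.linftyOpNormedRing Matrix.linftyOpNormedAlgebra in
lemma exp_mulVec_of_mulVec_eq_smul {𝕂 : Type*} [RCLike 𝕂] {A : Matrix ι ι 𝕂} {x : ι → 𝕂}
    {μ : 𝕂} (h : A *ᵥ x = μ • x) : NormedSpace.exp A *ᵥ x = NormedSpace.exp μ • x := by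
  have hA := (NormedSpace.exp_series_hasSum_exp' (𝕂 := 𝕂) A).map (mulVec.addMonoidHomLeft x)
    (continuous_id.matrix_mulVec continuous_const)
  have hμ := (NormedSpace.exp_series_hasSum_exp' (𝕂 := 𝕂) μ).smul_const x
  refine hA.unique (hμ.congr_fun fun k ↦ ?_)
  ext a
  simp [smul_mulVec, pow_mulVec_of_mulVec_eq_smul h, mul_assoc]

lemma exp_neg_I_mul_pi_div_two_smul_mulVec {L : Matrix ι ι ℂ} {x : ι → ℂ} {k : ℕ}
    (h : L *ᵥ x = (k : ℂ) • x) :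
    NormedSpace.exp (-(I * ((π / 2 : ℝ) : ℂ)) • L) *ᵥ x = (-I) ^ k • x := by
  rw [exp_mulVec_of_mulVec_eq_smul (μ := -(I * ((π / 2 : ℝ) : ℂ)) * k)
    (by rw [smul_mulVec, h, smul_smul]), ← exp_eq_exp_ℂ, mul_comm, Complex.exp_nat_mul,
    ← exp_neg_pi_div_two_mul_I]
  push_cast
  ring_nf

end Matrix

lemma Complex.neg_I_pow_four_mul (n : ℕ) : (-I) ^ (4 * n) = 1 := by
  rw [pow_mul]
  norm_num [neg_pow]

namespace SimpleGraph

variable {V W : Type*} [Fintype V] [Fintype W] [DecidableRel (completeBipartiteGraph V W).Adj]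

lemma completeBipartiteGraph_neighborFinset_inl (v : V) :
    (completeBipartiteGraph V W).neighborFinset (.inl v) = univ.map .inr := by
  ext (u | u) <;> simp

lemma completeBipartiteGraph_neighborFinset_inr (w : W) :
    (completeBipartiteGraph V W).neighborFinset (.inr w) = univ.map .inl := by
  ext (u | u) <;> simp

variable [DecidableEq V] [DecidableEq W]

section NonAssocRing

variable {R : Type*} [NonAssocRing R]

lemma completeBipartiteGraph_lapMatrix_mulVec_inl (x : V ⊕ W → R) (v : V) :
    ((completeBipartiteGraph V W).lapMatrix R *ᵥ x) (.inl v) =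
      Fintype.card W * x (.inl v) - ∑ w, x (.inr w) := by
  rw [lapMatrix_mulVec_apply, degree, completeBipartiteGraph_neighborFinset_inl, sum_map]
  simp

lemma completeBipartiteGraph_lapMatrix_mulVec_inr (x : V ⊕ W → R) (w : W) :
    ((completeBipartiteGraph V W).lapMatrix R *ᵥ x) (.inr w) =
      Fintype.card V * x (.inr w) - ∑ v, x (.inl v) := by
  rw [lapMatrix_mulVec_apply, degree, completeBipartiteGraph_neighborFinset_inr, sum_map]
  simp

lemma completeBipartiteGraph_lapMatrix_mulVec_elim_zero {f : V → R} (hf : ∑ v, f v = 0) :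
    (completeBipartiteGraph V W).lapMatrix R *ᵥ Sum.elim f 0 =
      (Fintype.card W : R) • Sum.elim f 0 := by
  ext (v | w)
  · simp [completeBipartiteGraph_lapMatrix_mulVec_inl]
  · simp [completeBipartiteGraph_lapMatrix_mulVec_inr, hf]

lemma completeBipartiteGraph_lapMatrix_mulVec_zero_elim {g : W → R} (hg : ∑ w, g w = 0) :
    (completeBipartiteGraph V W).lapMatrix R *ᵥ Sum.elim (0 : V → R) g =
      (Fintype.card V : R) • Sum.elim (0 : V → R) g := by
  ext (v | w)
  · simp [completeBipartiteGraph_lapMatrix_mulVec_inl, hg]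
  · simp [completeBipartiteGraph_lapMatrix_mulVec_inr]

end NonAssocRing

lemma completeBipartiteGraph_lapMatrix_mulVec_elim_const {R : Type*} [CommRing R] :
    (completeBipartiteGraph V W).lapMatrix R *ᵥ
        Sum.elim (fun _ ↦ (Fintype.card W : R)) (fun _ ↦ -(Fintype.card V : R)) =
      ((Fintype.card V + Fintype.card W : ℕ) : R) •
        Sum.elim (fun _ ↦ (Fintype.card W : R)) (fun _ ↦ -(Fintype.card V : R)) := by
  ext (v | w)
  · simp [completeBipartiteGraph_lapMatrix_mulVec_inl]; ring
  · simp [completeBipartiteGraph_lapMatrix_mulVec_inr]; ring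

end SimpleGraph

section K2_4n

open SimpleGraph

variable {n : ℕ} [DecidableRel (completeBipartiteGraph (Fin 2) (Fin (4 * n))).Adj]

lemma K2_4n_exp_mulVec_antisymm :
    NormedSpace.exp (-(I * ((π / 2 : ℝ) : ℂ)) •
        (completeBipartiteGraph (Fin 2) (Fin (4 * n))).lapMatrix ℂ) *ᵥ
        Sum.elim (Pi.single 0 1 - Pi.single 1 1 : Fin 2 → ℂ) (0 : Fin (4 * n) → ℂ) =
      Sum.elim (Pi.single 0 1 - Pi.single 1 1 : Fin 2 → ℂ) (0 : Fin (4 * n) → ℂ) := by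
  rw [exp_neg_I_mul_pi_div_two_smul_mulVec (k := 4 * n), neg_I_pow_four_mul, one_smul]
  simpa using completeBipartiteGraph_lapMatrix_mulVec_elim_zero (R := ℂ)
    (W := Fin (4 * n)) (f := Pi.single 0 1 - Pi.single 1 1) (by simp)

lemma K2_4n_exp_mulVec_symm (i : Fin (4 * n)) :
    NormedSpace.exp (-(I * ((π / 2 : ℝ) : ℂ)) •
        (completeBipartiteGraph (Fin 2) (Fin (4 * n))).lapMatrix ℂ) *ᵥ
        Sum.elim (1 : Fin 2 → ℂ) (Pi.single i (-2)) =
      -Sum.elim (1 : Fin 2 → ℂ) (Pi.single i (-2)) := by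
  have hn : (4 * n : ℂ) ≠ 0 := by
    have := i.pos
    norm_cast
    omega
  have hconst := completeBipartiteGraph_lapMatrix_mulVec_elim_const (R := ℂ) (V := Fin 2)
    (W := Fin (4 * n))
  have hright := completeBipartiteGraph_lapMatrix_mulVec_zero_elim (V := Fin 2)
    (g := (2 : Fin (4 * n) → ℂ) - Pi.single i (8 * n : ℂ)) (by simp [sum_sub_distrib]; ring)
  simp only [Fintype.card_fin] at hconst hright
  have hdecomp : (4 * n : ℂ) • Sum.elim (1 : Fin 2 → ℂ) (Pi.single i (-2)) =
      Sum.elim (fun _ ↦ ((4 * n : ℕ) : ℂ)) (fun _ ↦ -((2 : ℕ) : ℂ)) +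
        Sum.elim (0 : Fin 2 → ℂ) ((2 : Fin (4 * n) → ℂ) - Pi.single i (8 * n : ℂ)) := by
    ext (a | j)
    · simp
    · by_cases hj : j = i <;> simp [hj]; ring
  refine smul_right_injective _ hn ?_
  dsimp only
  rw [← mulVec_smul, hdecomp, mulVec_add, exp_neg_I_mul_pi_div_two_smul_mulVec hconst,
    exp_neg_I_mul_pi_div_two_smul_mulVec hright, pow_add, neg_I_pow_four_mul, smul_neg, hdecomp]
  simp only [neg_sq, I_sq, mul_one, neg_one_smul, neg_add]

end K2_4n

theorem complete_bipartite_K2_4n_pair_lpst_general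
    {n : ℕ}
    [inst : DecidableRel (completeBipartiteGraph (Fin 2) (Fin (4 * n))).Adj]
    (i : Fin (4 * n)) :
    ∃ γ : ℂ, ‖γ‖ = 1 ∧
      (NormedSpace.exp ((-(Complex.I * ((Real.pi / 2 : ℝ) : ℂ))) •
          (completeBipartiteGraph (Fin 2) (Fin (4 * n))).lapMatrix ℂ)).mulVec
          ((Pi.single (Sum.inl 0) 1 : Fin 2 ⊕ Fin (4 * n) → ℂ) - Pi.single (Sum.inr i) 1)
        = γ • ((Pi.single (Sum.inl 1) 1 : Fin 2 ⊕ Fin (4 * n) → ℂ) - Pi.single (Sum.inr i) 1) := by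
  set x : Fin 2 ⊕ Fin (4 * n) → ℂ := Pi.single (.inl 0) 1 - Pi.single (.inr i) 1
  set y : Fin 2 ⊕ Fin (4 * n) → ℂ := Pi.single (.inl 1) 1 - Pi.single (.inr i) 1
  have hsub :
      x - y = Sum.elim (Pi.single 0 1 - Pi.single 1 1 : Fin 2 → ℂ) (0 : Fin (4 * n) → ℂ) := by
    ext (a | j) <;> simp [x, y, Pi.single_apply]
  have hadd : x + y = Sum.elim (1 : Fin 2 → ℂ) (Pi.single i (-2)) := by
    ext (a | j)
    · fin_cases a <;> simp [x, y]
    · by_cases hj : j = i <;> simp [x, y, hj]; ring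
  have h2x : (2 : ℂ) • x = (x - y) + (x + y) := by module
  refine ⟨-1, by simp, smul_right_injective _ (two_ne_zero (α := ℂ)) ?_⟩
  dsimp only
  rw [← mulVec_smul, h2x, mulVec_add, hsub, hadd, K2_4n_exp_mulVec_antisymm,
    K2_4n_exp_mulVec_symm, ← hsub, ← hadd]
  module

theorem complete_bipartite_K2_4n_pair_lpst
    {n : ℕ} (hn : 1 ≤ n)
    [inst : DecidableRel (completeBipartiteGraph (Fin 2) (Fin (4 * n))).Adj]
    (i : Fin (4 * n)) :
    ∃ γ : ℂ, ‖γ‖ = 1 ∧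
      (NormedSpace.exp ((-(Complex.I * ((Real.pi / 2 : ℝ) : ℂ))) •
          (completeBipartiteGraph (Fin 2) (Fin (4 * n))).lapMatrix ℂ)).mulVec
          ((Pi.single (Sum.inl 0) 1 : Fin 2 ⊕ Fin (4 * n) → ℂ) - Pi.single (Sum.inr i) 1)
        = γ • ((Pi.single (Sum.inl 1) 1 : Fin 2 ⊕ Fin (4 * n) → ℂ) - Pi.single (Sum.inr i) 1) :=
  complete_bipartite_K2_4n_pair_lpst_general (inst := inst) i
end
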